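/- Let Y be a nonempty subset of a metric space X, V a set, and f : Y → L^∞(V) a Lipschitz map (where L^∞(V) is the space of bounded real-valued functions on V with the sup norm). Define F : X → L^∞(V) by F_x(v) = inf_{y ∈ Y} (f_y(v) + dil(f,y)·d(x,y)), where dil(f,y) = sup_{y'≠y} d(f(y),f(y'))/d(y,y'). Then F is well-defined (F_x is a bounded function for each x) and F restricted to Y equals f. -/

import Mathlib

/-!
Lipschitz-ness of `f` gives `dil(f, y) ≤ L` and `d(f y, f y') ≤ dil(f, y') · d(y, y')`, and evaluation at
`v` is 1-Lipschitz on `L^∞(V)`. Coordinatewise, `F_x(v)` is therefore an infimum of cones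
`f_y(v) + c_y · d(x, y)` with slopes `0 ≤ c_y ≤ L`, each of which is `≥ f_{y'}(v)` at every
`x = y' ∈ Y`; so at `x = y` the infimum is attained by the cone at `y`, and for general `x` it is
squeezed between `f_{y₀}(v) ∓ L · d(x, y₀)` for a fixed `y₀ ∈ Y`.
-/

open scoped ENNReal NNReal

open Set

/-- The pointwise dilatation `dil(g, a) = sup_{a' ≠ a} d(g a, g a') / d(a, a')`. -/
noncomputable def ptDil {A E : Type*} [MetricSpace A] [MetricSpace E]
    (g : A → E) (a : A) : ℝ :=
  sSup {r : ℝ | ∃ a' : A, a' ≠ a ∧ r = dist (g a) (g a') / dist a a'}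

section ptDil

variable {A E : Type*} [MetricSpace A] [MetricSpace E] {g : A → E} {K : ℝ≥0}

theorem ptDil_nonneg (g : A → E) (a : A) : 0 ≤ ptDil g a :=
  Real.sSup_nonneg <| by
    rintro r ⟨a', -, rfl⟩
    positivity

theorem LipschitzWith.dist_div_le (hg : LipschitzWith K g) {a a' : A} (h : a' ≠ a) :
    dist (g a) (g a') / dist a a' ≤ K :=
  (div_le_iff₀ (dist_pos.mpr h.symm)).mpr (hg.dist_le_mul a a')

theorem LipschitzWith.ptDil_le (hg : LipschitzWith K g) (a : A) : ptDil g a ≤ K :=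
  Real.sSup_le (by rintro r ⟨a', h, rfl⟩; exact hg.dist_div_le h) K.coe_nonneg

theorem LipschitzWith.dist_le_ptDil_mul (hg : LipschitzWith K g) (a a' : A) :
    dist (g a) (g a') ≤ ptDil g a * dist a a' := by
  rcases eq_or_ne a' a with rfl | h
  · simp
  · refine (div_le_iff₀ (dist_pos.mpr h.symm)).mp (le_csSup ⟨K, ?_⟩ ⟨a', h, rfl⟩)
    rintro r ⟨a'', h', rfl⟩
    exact hg.dist_div_le h'

end ptDil

theorem lp.sub_apply_le_dist {V : Type*} (f g : lp (fun _ : V => ℝ) ∞) (v : V) :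
    (f : ∀ _ : V, ℝ) v - g v ≤ dist f g := by
  have := (lp.lipschitzWith_one_eval (E := fun _ : V => ℝ) ∞ v).dist_le_mul f g
  rw [NNReal.coe_one, one_mul, Real.dist_eq] at this
  exact (le_abs_self _).trans this

section Cones

variable {X ι : Type*} [MetricSpace X] {p : ι → X} {φ c : ι → ℝ} {K : ℝ}

theorem sub_mul_dist_le_add_mul_dist {i j : ι} (hc₀ : 0 ≤ c j) (hcK : c j ≤ K)
    (hφ : φ i - φ j ≤ c j * dist (p j) (p i)) (x : X) :
    φ i - K * dist x (p i) ≤ φ j + c j * dist x (p j) := by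
  have htri : dist (p j) (p i) ≤ dist x (p j) + dist x (p i) := dist_triangle_left _ _ x
  have hK : c j * dist x (p i) ≤ K * dist x (p i) := by gcongr
  nlinarith

variable (hφ : ∀ i j, φ i - φ j ≤ c j * dist (p j) (p i))
include hφ

theorem iInf_add_mul_dist_self (i : ι) :
    ⨅ j, (φ j + c j * dist (p i) (p j)) = φ i := by
  have : Nonempty ι := ⟨i⟩
  have hge : ∀ j, φ i ≤ φ j + c j * dist (p i) (p j) := fun j => by
    rw [dist_comm]
    linarith [hφ i j]
  refine le_antisymm ?_ (le_ciInf hge)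
  simpa using ciInf_le ⟨φ i, forall_mem_range.mpr hge⟩ i

variable (hc₀ : ∀ j, 0 ≤ c j) (hcK : ∀ j, c j ≤ K)
include hc₀ hcK

theorem abs_iInf_add_mul_dist_le (i : ι) (x : X) :
    |⨅ j, (φ j + c j * dist x (p j))| ≤ |φ i| + K * dist x (p i) := by
  have : Nonempty ι := ⟨i⟩
  have hlow : ∀ j, φ i - K * dist x (p i) ≤ φ j + c j * dist x (p j) := fun j =>
    sub_mul_dist_le_add_mul_dist (hc₀ j) (hcK j) (hφ i j) x
  have hup : ⨅ j, (φ j + c j * dist x (p j)) ≤ φ i + c i * dist x (p i) :=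
    ciInf_le ⟨_, forall_mem_range.mpr hlow⟩ i
  have hci : c i * dist x (p i) ≤ K * dist x (p i) := by gcongr; exact hcK i
  rw [abs_le]
  constructor <;> linarith [le_ciInf hlow, neg_abs_le (φ i), le_abs_self (φ i)]

end Cones

/-- For a Lipschitz map `f : Y → L^∞(V)` on a nonempty subset `Y` of a metric space `X`,
the formula `F_x(v) = inf_{y ∈ Y} (f_y(v) + dil(f,y)·d(x,y))` defines a bounded function of
`v` for every `x ∈ X` (well-definedness), and `F` restricted to `Y` equals `f`. -/
theorem stmt_0 {X V : Type*} [MetricSpace X] (Y : Set X) (hY : Y.Nonempty)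
    (f : Y → lp (fun _ : V => ℝ) ∞) (L : ℝ≥0) (hf : LipschitzWith L f) :
    (∀ x : X, Memℓp (fun v : V =>
        ⨅ y : Y, ((f y : ∀ _ : V, ℝ) v + ptDil f y * dist x (y : X))) ∞) ∧
    (∀ y : Y, (fun v : V =>
        ⨅ y' : Y, ((f y' : ∀ _ : V, ℝ) v + ptDil f y' * dist (y : X) (y' : X)))
      = ((f y : ∀ _ : V, ℝ))) := by
  have hcone : ∀ (v : V) (y y' : Y),
      (f y : ∀ _ : V, ℝ) v - (f y' : ∀ _ : V, ℝ) v ≤ ptDil f y' * dist (y' : X) (y : X) :=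
    fun v y y' => (lp.sub_apply_le_dist _ _ v).trans <| by
      rw [dist_comm]
      exact hf.dist_le_ptDil_mul y' y
  obtain ⟨x₀, hx₀⟩ := hY
  refine ⟨fun x => memℓp_infty ⟨‖f ⟨x₀, hx₀⟩‖ + L * dist x x₀, ?_⟩,
    fun y => funext fun v => iInf_add_mul_dist_self (hcone v) y⟩
  rintro r ⟨v, rfl⟩
  refine (Real.norm_eq_abs _).trans_le <| (abs_iInf_add_mul_dist_le (hcone v) (ptDil_nonneg f) hf.ptDil_le ⟨x₀, hx₀⟩ x).trans ?_
  gcongr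
  exact lp.norm_apply_le_norm ENNReal.top_ne_zero (f ⟨x₀, hx₀⟩) v
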